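/- Every connected non-regular subcubic graph with minimum degree at most 1 whose every proper induced subgraph obtained by deleting a minimum-degree vertex is (1,1,2,2)-packing colorable is itself (1,1,2,2)-packing colorable. -/

import Mathlib

open SimpleGraph

variable {V : Type*}

/-- The square of a graph: vertices adjacent iff their distance in `G` is 1 or 2. -/
def square (G : SimpleGraph V) : SimpleGraph V where
  Adj x y := x ≠ y ∧ (G.Adj x y ∨ ∃ z, G.Adj x z ∧ G.Adj z y)
  symm := ⟨by
    rintro x y ⟨hxy, h | ⟨z, h1, h2⟩⟩
    · exact ⟨hxy.symm, Or.inl h.symm⟩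
    · exact ⟨hxy.symm, Or.inr ⟨z, h2.symm, h1.symm⟩⟩⟩
  loopless := ⟨fun x h => h.1 rfl⟩

/-- Any two distinct vertices of `A` are at distance at least 3 in `G`
(equivalently, non-adjacent in the square of `G`). -/
def PairwiseDist3 (G : SimpleGraph V) (A : Set V) : Prop :=
  ∀ x ∈ A, ∀ y ∈ A, x ≠ y → ¬ (square G).Adj x y

/-- `A` is an independent set of `G`. -/
def IndepSet (G : SimpleGraph V) (A : Set V) : Prop :=
  ∀ x ∈ A, ∀ y ∈ A, ¬ G.Adj x y

/-- `V1, V2, V3, V4` form a `(1,1,2,2)`-packing coloring of `G`. -/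
def IsPacking1122 (G : SimpleGraph V) (V1 V2 V3 V4 : Set V) : Prop :=
  (∀ v, v ∈ V1 ∨ v ∈ V2 ∨ v ∈ V3 ∨ v ∈ V4) ∧
  Disjoint V1 V2 ∧ Disjoint V1 V3 ∧ Disjoint V1 V4 ∧
  Disjoint V2 V3 ∧ Disjoint V2 V4 ∧ Disjoint V3 V4 ∧
  IndepSet G V1 ∧ IndepSet G V2 ∧ PairwiseDist3 G V3 ∧ PairwiseDist3 G V4

/-- `G` is `(1,1,2,2)`-packing colorable. -/
def Packing1122 (G : SimpleGraph V) : Prop :=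
  ∃ V1 V2 V3 V4 : Set V, IsPacking1122 G V1 V2 V3 V4

/-! A vertex `u` with at most one neighbour can be deleted: no path of length two passes
through `u`, so distances below 3 between the remaining vertices are the same in `G` and in
`G - u`, and a colouring of `G - u` stays valid in `G`. The vertex `u` then takes whichever of
the two independent colours its (unique) neighbour does not carry. -/

section

variable {G : SimpleGraph V}

lemma SimpleGraph.degree_le_one_iff_neighborSet_subsingleton [Fintype V] [DecidableRel G.Adj]
    {u : V} : G.degree u ≤ 1 ↔ (G.neighborSet u).Subsingleton := by
  rw [← card_neighborFinset_eq_degree, Finset.card_le_one]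
  simp only [mem_neighborFinset]
  rfl

lemma IndepSet.image_val {s : Set V} {A : Set s}
    (hA : IndepSet (G.induce s) A) : IndepSet G (Subtype.val '' A) := by
  rintro _ ⟨x, hx, rfl⟩ _ ⟨y, hy, rfl⟩ hxy
  exact hA x hx y hy hxy

lemma IndepSet.insert {A : Set V} {u : V} (hA : IndepSet G A)
    (hu : ∀ w ∈ A, ¬ G.Adj u w) : IndepSet G (insert u A) := by
  rintro x (rfl | hx) y (rfl | hy) hxy
  · exact G.loopless.irrefl _ hxy
  · exact hu y hy hxy
  · exact hu x hx hxy.symm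
  · exact hA x hx y hy hxy

lemma PairwiseDist3.image_val {s : Set V}
    (hs : ∀ z ∉ s, (G.neighborSet z).Subsingleton) {A : Set s}
    (hA : PairwiseDist3 (G.induce s) A) : PairwiseDist3 G (Subtype.val '' A) := by
  rintro _ ⟨x, hx, rfl⟩ _ ⟨y, hy, rfl⟩ hne ⟨-, hxy | ⟨z, hxz, hzy⟩⟩
  · exact hA x hx y hy (Subtype.coe_ne_coe.1 hne) ⟨Subtype.coe_ne_coe.1 hne, Or.inl hxy⟩
  · have hz : z ∈ s := by
      by_contra hz
      exact hne (hs z hz hxz.symm hzy)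
    exact hA x hx y hy (Subtype.coe_ne_coe.1 hne)
      ⟨Subtype.coe_ne_coe.1 hne, Or.inr ⟨⟨z, hz⟩, hxz, hzy⟩⟩

lemma IsPacking1122.swap {V1 V2 V3 V4 : Set V}
    (h : IsPacking1122 G V1 V2 V3 V4) : IsPacking1122 G V2 V1 V3 V4 := by
  obtain ⟨hcov, h12, h13, h14, h23, h24, h34, hi1, hi2, hd3, hd4⟩ := h
  refine ⟨fun v => ?_, h12.symm, h23, h24, h13, h14, h34, hi2, hi1, hd3, hd4⟩
  rcases hcov v with h | h | h | h <;> simp [h]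

lemma IsPacking1122.insert_of_induce_compl_singleton {u : V}
    (hu : (G.neighborSet u).Subsingleton) {V1 V2 V3 V4 : Set ({u}ᶜ : Set V)}
    (h : IsPacking1122 (G.induce {u}ᶜ) V1 V2 V3 V4) (hV1 : ∀ w ∈ V1, ¬ G.Adj u w) :
    IsPacking1122 G (insert u (Subtype.val '' V1)) (Subtype.val '' V2) (Subtype.val '' V3)
      (Subtype.val '' V4) := by
  obtain ⟨hcov, h12, h13, h14, h23, h24, h34, hi1, hi2, hd3, hd4⟩ := h
  have hs : ∀ z ∉ ({u}ᶜ : Set V), (G.neighborSet z).Subsingleton := by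
    intro z hz
    rwa [Set.notMem_compl_iff.1 hz]
  have hu_notMem : ∀ A : Set ({u}ᶜ : Set V), u ∉ Subtype.val '' A := by
    rintro A ⟨x, -, hxu⟩
    exact x.2 hxu
  have disj (A B : Set ({u}ᶜ : Set V)) (hAB : Disjoint A B) :
      Disjoint (Subtype.val '' A) (Subtype.val '' B) :=
    (Set.disjoint_image_iff Subtype.val_injective).2 hAB
  refine ⟨fun v => ?_, Set.disjoint_insert_left.2 ⟨hu_notMem _, disj _ _ h12⟩,
    Set.disjoint_insert_left.2 ⟨hu_notMem _, disj _ _ h13⟩,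
    Set.disjoint_insert_left.2 ⟨hu_notMem _, disj _ _ h14⟩, disj _ _ h23, disj _ _ h24,
    disj _ _ h34, hi1.image_val.insert ?_, hi2.image_val, hd3.image_val hs, hd4.image_val hs⟩
  · by_cases hv : v = u
    · exact Or.inl (Or.inl hv)
    · rcases hcov ⟨v, hv⟩ with h | h | h | h
      · exact Or.inl (Or.inr ⟨_, h, rfl⟩)
      · exact Or.inr (Or.inl ⟨_, h, rfl⟩)
      · exact Or.inr (Or.inr (Or.inl ⟨_, h, rfl⟩))
      · exact Or.inr (Or.inr (Or.inr ⟨_, h, rfl⟩))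
  · rintro _ ⟨w, hw, rfl⟩
    exact hV1 w hw

lemma Packing1122.of_induce_compl_singleton {u : V}
    (hu : (G.neighborSet u).Subsingleton) (h : Packing1122 (G.induce {u}ᶜ)) :
    Packing1122 G := by
  obtain ⟨V1, V2, V3, V4, hP⟩ := h
  by_cases hV1 : ∀ w ∈ V1, ¬ G.Adj u w
  · exact ⟨_, _, _, _, hP.insert_of_induce_compl_singleton hu hV1⟩
  · push Not at hV1
    obtain ⟨w₁, hw₁, huw₁⟩ := hV1
    refine ⟨_, _, _, _, hP.swap.insert_of_induce_compl_singleton hu fun w hw huw => ?_⟩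
    have hww₁ : w = w₁ := Subtype.ext (hu huw huw₁)
    exact Set.disjoint_left.1 hP.2.1 hw₁ (hww₁ ▸ hw)

end

theorem stmt12_general [Fintype V] (G : SimpleGraph V) [DecidableRel G.Adj]
    (hδ : ∃ v, G.degree v ≤ 1)
    (hdel : ∀ u : V, (∀ v, G.degree u ≤ G.degree v) →
      Packing1122 (G.induce ({u}ᶜ : Set V))) :
    Packing1122 G := by
  obtain ⟨v₀, hv₀⟩ := hδ
  have : Nonempty V := ⟨v₀⟩
  obtain ⟨u, hu⟩ := G.exists_minimal_degree_vertex
  have humin : ∀ v, G.degree u ≤ G.degree v := fun v => hu ▸ G.minDegree_le_degree v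
  have hu_nbr : (G.neighborSet u).Subsingleton :=
    degree_le_one_iff_neighborSet_subsingleton.1 ((humin v₀).trans hv₀)
  exact (hdel u humin).of_induce_compl_singleton hu_nbr

theorem stmt12 [Fintype V] (G : SimpleGraph V) [DecidableRel G.Adj]
    (hconn : G.Connected) (hsub : ∀ v, G.degree v ≤ 3) (hnonreg : ∃ v, G.degree v < 3)
    (hδ : ∃ v, G.degree v ≤ 1)
    (hdel : ∀ u : V, (∀ v, G.degree u ≤ G.degree v) →
      Packing1122 (G.induce ({u}ᶜ : Set V))) :
    Packing1122 G :=
  stmt12_general G hδ hdel
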